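/- Under monotonicity (Y₁(i) ≥ Y₀(i) for all i), the difference-in-means estimator τ̂(T) = n₁₁(T)/N₁ − n₀₁(T)/N₀ has expectation τ and variance var(τ̂) = (N/(N−1))·{ p₁(1−p₁)/N₁ + p₀(1−p₀)/N₀ − τ(1−τ)/N }, where all moments are over the uniform distribution on subsets T of size N₁. -/

import Mathlib

/-!
Writing `w i = Y₁(i)/N₁ + Y₀(i)/N₀`, the estimator is `τ̂(T) = ∑ i ∈ T, w i - ∑ i, Y₀(i)/N₀`, a
linear statistic of a simple random sample shifted by a constant. Counting the `k`-subsets of an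
`N`-set containing one, resp. two, given points gives the classical moments
`E = (k/N) ∑ w i` and `Var = k(N-k)/(N(N-1)) · (∑ w i ^ 2 - (∑ w i)^2/N)`. For binary outcomes with
`Y₀ ≤ Y₁` one has `w i ^ 2 = Y₁(i)/N₁² + 2Y₀(i)/(N₁N₀) + Y₀(i)/N₀²`, so both moments only involve
`∑ Y₁ = N p₁` and `∑ Y₀ = N p₀`, and `τ = p₁ - p₀`.
-/

/-- Expectation of a real-valued statistic `f` of the treatment group `T`,
where `T` is a uniformly random subset of `{1,…,N}` of size `N₁`. -/
noncomputable def expE (N N₁ : ℕ) (f : Finset (Fin N) → ℝ) : ℝ :=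
  (∑ T ∈ Finset.powersetCard N₁ (Finset.univ : Finset (Fin N)), f T) /
    ((Finset.powersetCard N₁ (Finset.univ : Finset (Fin N))).card : ℝ)

/-- Variance of a real-valued statistic `f` over uniformly random subsets of size `N₁`. -/
noncomputable def varE (N N₁ : ℕ) (f : Finset (Fin N) → ℝ) : ℝ :=
  expE N N₁ (fun T => (f T - expE N N₁ f) ^ 2)

open Finset

section Counting

variable {α : Type*} [DecidableEq α]

theorem card_filter_superset_powersetCard {s t : Finset α} {k : ℕ} (hts : t ⊆ s)
    (htk : #t ≤ k) : #{T ∈ s.powersetCard k | t ⊆ T} = (#s - #t).choose (k - #t) := by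
  rw [← card_sdiff_of_subset hts, ← card_powersetCard]
  refine card_bij' (fun T _ => T \ t) (fun T' _ => T' ∪ t) ?_ ?_ ?_ ?_
  · simp only [mem_filter, mem_powersetCard, and_imp]
    intro T hTs hTk htT
    exact ⟨sdiff_subset_sdiff hTs le_rfl, by rw [card_sdiff_of_subset htT, hTk]⟩
  · simp only [mem_filter, mem_powersetCard, and_imp]
    intro T' hT's hT'k
    have hdisj : Disjoint T' t := Disjoint.mono_left hT's sdiff_disjoint
    refine ⟨⟨union_subset (hT's.trans sdiff_subset) hts, ?_⟩, subset_union_right⟩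
    rw [card_union_of_disjoint hdisj, hT'k]
    omega
  · intro T hT
    exact sdiff_union_of_subset (mem_filter.1 hT).2
  · intro T' hT'
    exact union_sdiff_cancel_right (Disjoint.mono_left (mem_powersetCard.1 hT').1 sdiff_disjoint)

theorem card_filter_mem_powersetCard_mul {s : Finset α} {i : α} (hi : i ∈ s) (k : ℕ) :
    (#{T ∈ s.powersetCard k | i ∈ T} : ℝ) * #s = (#s).choose k * k := by
  cases k with
  | zero => simp
  | succ k =>
    obtain ⟨n, hn⟩ := Nat.exists_eq_succ_of_ne_zero (card_ne_zero_of_mem hi)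
    have hcount := card_filter_superset_powersetCard (k := k + 1) (singleton_subset_iff.2 hi)
      (by simp)
    simp only [singleton_subset_iff, card_singleton, hn, Nat.add_sub_cancel] at hcount
    rw [hcount, hn]
    push_cast
    exact_mod_cast (mul_comm _ _).trans (Nat.add_one_mul_choose_eq n k)

theorem card_filter_mem_mem_powersetCard_mul {s : Finset α} {i j : α} (hi : i ∈ s) (hj : j ∈ s)
    (k : ℕ) : (#{T ∈ s.powersetCard k | i ∈ T ∧ j ∈ T} : ℝ) * (#s * (#s - 1)) =
      (#s).choose k * (k * (k - 1) + if i = j then (k : ℝ) * (#s - k) else 0) := by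
  by_cases hij : i = j
  · subst hij
    simp only [and_self, if_true]
    rw [← mul_assoc, card_filter_mem_powersetCard_mul hi]
    ring
  rw [if_neg hij, add_zero]
  have hpair : #({i, j} : Finset α) = 2 := card_pair hij
  obtain ⟨n, hn⟩ : ∃ n, #s = n + 2 :=
    Nat.exists_eq_add_of_le' (hpair ▸ card_le_card (insert_subset hi (singleton_subset_iff.2 hj)))
  rcases Nat.lt_or_ge k 2 with hk | hk
  · have hempty : {T ∈ s.powersetCard k | i ∈ T ∧ j ∈ T} = ∅ := by
      refine filter_eq_empty_iff.2 fun T hT hijT => ?_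
      have := one_lt_card.2 ⟨i, hijT.1, j, hijT.2, hij⟩
      rw [(mem_powersetCard.1 hT).2] at this
      omega
    interval_cases k <;> simp [hempty]
  obtain ⟨k, rfl⟩ := Nat.exists_eq_add_of_le' hk
  have hcount := card_filter_superset_powersetCard (k := k + 2)
    (insert_subset hi (singleton_subset_iff.2 hj)) (by omega)
  simp only [insert_subset_iff, singleton_subset_iff, hpair, hn, Nat.add_sub_cancel] at hcount
  rw [hcount, hn]
  have h₁ := congrArg (Nat.cast : ℕ → ℝ) (Nat.add_one_mul_choose_eq n k)
  have h₂ := congrArg (Nat.cast : ℕ → ℝ) (Nat.add_one_mul_choose_eq (n + 1) (k + 1))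
  push_cast at h₁ h₂ ⊢
  linear_combination (n + 2 : ℝ) * h₁ + (k + 1 : ℝ) * h₂

theorem sum_powersetCard_sum_mul (s : Finset α) (k : ℕ) (w : α → ℝ) :
    (∑ T ∈ s.powersetCard k, ∑ i ∈ T, w i) * #s = (#s).choose k * k * ∑ i ∈ s, w i := by
  have hswap : ∑ T ∈ s.powersetCard k, ∑ i ∈ T, w i =
      ∑ i ∈ s, ∑ T ∈ s.powersetCard k with i ∈ T, w i :=
    sum_comm' fun T i => by
      simp only [mem_powersetCard, mem_filter]
      exact ⟨fun h => ⟨h, h.1.1 h.2⟩, fun h => h.1⟩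
  rw [hswap, sum_mul, mul_sum]
  refine sum_congr rfl fun i hi => ?_
  rw [sum_const, nsmul_eq_mul, mul_right_comm, card_filter_mem_powersetCard_mul hi]

theorem sum_powersetCard_sq_sum_mul (s : Finset α) (k : ℕ) (w : α → ℝ) :
    (∑ T ∈ s.powersetCard k, (∑ i ∈ T, w i) ^ 2) * (#s * (#s - 1)) =
      (#s).choose k * (k * (k - 1) * (∑ i ∈ s, w i) ^ 2 + k * (#s - k) * ∑ i ∈ s, w i ^ 2) := by
  have hsq : ∀ T : Finset α, (∑ i ∈ T, w i) ^ 2 = ∑ p ∈ T ×ˢ T, w p.1 * w p.2 := fun T => by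
    rw [sq, sum_mul_sum, sum_product]
  have hswap : ∑ T ∈ s.powersetCard k, ∑ p ∈ T ×ˢ T, w p.1 * w p.2 =
      ∑ p ∈ s ×ˢ s, ∑ T ∈ s.powersetCard k with p.1 ∈ T ∧ p.2 ∈ T, w p.1 * w p.2 :=
    sum_comm' fun T p => by
      simp only [mem_powersetCard, mem_filter, mem_product]
      exact ⟨fun h => ⟨h, h.1.1 h.2.1, h.1.1 h.2.2⟩, fun h => h.1⟩
  simp only [hsq, hswap, sum_const, nsmul_eq_mul, sum_mul]
  rw [sum_congr rfl fun p hp => by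
    obtain ⟨hp₁, hp₂⟩ := mem_product.1 hp
    rw [mul_right_comm, card_filter_mem_mem_powersetCard_mul hp₁ hp₂]]
  simp only [mul_add, add_mul, sum_add_distrib, sum_product, mul_ite, ite_mul, mul_zero, zero_mul,
    sum_ite_eq, mul_sum]
  exact congrArg₂ (· + ·) (sum_congr rfl fun _ _ => sum_congr rfl fun _ _ => by ring)
    (sum_congr rfl fun i hi => by rw [if_pos hi]; ring)

end Counting

section UniformSubset

variable {N k : ℕ}

theorem expE_eq (f : Finset (Fin N) → ℝ) :
    expE N k f = (∑ T ∈ powersetCard k univ, f T) / N.choose k := by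
  rw [expE, card_powersetCard, card_univ, Fintype.card_fin]

theorem expE_sub_const (hk : k ≤ N) (f : Finset (Fin N) → ℝ) (c : ℝ) :
    expE N k (fun T => f T - c) = expE N k f - c := by
  have hC : (N.choose k : ℝ) ≠ 0 := by exact_mod_cast (Nat.choose_pos hk).ne'
  rw [expE_eq, expE_eq, sum_sub_distrib, sum_const, card_powersetCard, card_univ,
    Fintype.card_fin, nsmul_eq_mul]
  field_simp

theorem varE_sub_const (hk : k ≤ N) (f : Finset (Fin N) → ℝ) (c : ℝ) :
    varE N k (fun T => f T - c) = varE N k f := by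
  simp only [varE, expE_sub_const hk, sub_sub_sub_cancel_right]

theorem varE_eq_expE_sq_sub (hk : k ≤ N) (f : Finset (Fin N) → ℝ) :
    varE N k f = expE N k (fun T => f T ^ 2) - expE N k f ^ 2 := by
  have hC : (N.choose k : ℝ) ≠ 0 := by exact_mod_cast (Nat.choose_pos hk).ne'
  simp only [varE, expE_eq, sub_sq, sum_add_distrib, sum_sub_distrib, ← sum_mul, ← mul_sum,
    sum_const, card_powersetCard, card_univ, Fintype.card_fin, nsmul_eq_mul]
  field_simp
  ring

theorem expE_sum (hk : k ≤ N) (w : Fin N → ℝ) :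
    expE N k (fun T => ∑ i ∈ T, w i) = k / N * ∑ i, w i := by
  rcases N.eq_zero_or_pos with rfl | hN
  · simp [expE_eq, eq_empty_of_isEmpty]
  have hC : (N.choose k : ℝ) ≠ 0 := by exact_mod_cast (Nat.choose_pos hk).ne'
  have h := sum_powersetCard_sum_mul univ k w
  rw [card_univ, Fintype.card_fin] at h
  rw [expE_eq]
  field_simp
  linear_combination h

theorem varE_sum (hN : 2 ≤ N) (hk : k ≤ N) (w : Fin N → ℝ) :
    varE N k (fun T => ∑ i ∈ T, w i) =
      k * (N - k) / (N * (N - 1)) * (∑ i, w i ^ 2 - (∑ i, w i) ^ 2 / N) := by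
  have hC : (N.choose k : ℝ) ≠ 0 := by exact_mod_cast (Nat.choose_pos hk).ne'
  have hN' : (2 : ℝ) ≤ N := by exact_mod_cast hN
  have hN₁ : (N : ℝ) - 1 ≠ 0 := by linarith
  have hN₀ : (N : ℝ) ≠ 0 := by linarith
  have h := sum_powersetCard_sq_sum_mul univ k w
  rw [card_univ, Fintype.card_fin] at h
  rw [varE_eq_expE_sq_sub hk, expE_sum hk, expE_eq]
  field_simp
  linear_combination (N : ℝ) * h

end UniformSubset

section BinaryOutcomes

variable {ι : Type*}

theorem cast_card_filter_eq_one_eq_sum (s : Finset ι) {a : ι → ℕ} (ha : ∀ i, a i ≤ 1) :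
    (#{i ∈ s | a i = 1} : ℝ) = ∑ i ∈ s, (a i : ℝ) := by
  rw [natCast_card_filter]
  refine sum_congr rfl fun i _ => ?_
  have := ha i
  interval_cases a i <;> simp

theorem sum_cast_eq_card_filter_and_add [Fintype ι] {a b : ι → ℕ} (ha : ∀ i, a i ≤ 1)
    (hb : ∀ i, b i ≤ 1) :
    ∑ i, (a i : ℝ) = #{i | a i = 1 ∧ b i = 1} + #{i | a i = 1 ∧ b i = 0} := by
  rw [natCast_card_filter, natCast_card_filter, ← sum_add_distrib]
  refine sum_congr rfl fun i _ => ?_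
  have := ha i
  have := hb i
  interval_cases a i <;> interval_cases b i <;> simp

theorem card_filter_div_sub_card_compl_filter_div [Fintype ι] [DecidableEq ι] {a b : ι → ℕ}
    (ha : ∀ i, a i ≤ 1) (hb : ∀ i, b i ≤ 1) (x y : ℝ) (T : Finset ι) :
    (#{i ∈ T | a i = 1} : ℝ) / x - #{i ∈ Tᶜ | b i = 1} / y =
      ∑ i ∈ T, ((a i : ℝ) / x + b i / y) - (∑ i, (b i : ℝ)) / y := by
  rw [cast_card_filter_eq_one_eq_sum _ ha, cast_card_filter_eq_one_eq_sum _ hb,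
    ← sum_compl_add_sum T, sum_add_distrib, ← sum_div, ← sum_div]
  ring

theorem sum_div_add_div_sq_of_le (s : Finset ι) {a b : ι → ℕ} (hba : ∀ i, b i ≤ a i)
    (ha : ∀ i, a i ≤ 1) (x y : ℝ) :
    ∑ i ∈ s, ((a i : ℝ) / x + b i / y) ^ 2 =
      (∑ i ∈ s, (a i : ℝ)) / x ^ 2 + 2 * (∑ i ∈ s, (b i : ℝ)) / (x * y) +
        (∑ i ∈ s, (b i : ℝ)) / y ^ 2 := by
  simp only [sum_div, mul_sum, ← sum_add_distrib]
  refine sum_congr rfl fun i _ => ?_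
  have := hba i
  have := ha i
  interval_cases a i <;> interval_cases b i <;> (push_cast; ring)

end BinaryOutcomes

theorem stmt_5_general (N N₁ N₀ : ℕ) (hN₁ : 1 ≤ N₁) (hN₁' : N₁ ≤ N - 1)
    (hN₀ : N₀ = N - N₁)
    (Y1 Y0 : Fin N → ℕ) (hY1 : ∀ i, Y1 i ≤ 1) (hY0 : ∀ i, Y0 i ≤ 1)
    (hmono : ∀ i, Y0 i ≤ Y1 i)
    (N11 N10 N01 : ℕ)
    (hN11 : N11 = (Finset.univ.filter (fun i => Y1 i = 1 ∧ Y0 i = 1)).card)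
    (hN10 : N10 = (Finset.univ.filter (fun i => Y1 i = 1 ∧ Y0 i = 0)).card)
    (hN01 : N01 = (Finset.univ.filter (fun i => Y1 i = 0 ∧ Y0 i = 1)).card)
    (p1 p0 τ : ℝ) (hp1 : p1 = ((N11 : ℝ) + N10) / N) (hp0 : p0 = ((N11 : ℝ) + N01) / N)
    (hτ : τ = ((N10 : ℝ) - N01) / N)
    (n11 n01 : Finset (Fin N) → ℕ)
    (hn11 : ∀ T, n11 T = (T.filter (fun i => Y1 i = 1)).card)
    (hn01 : ∀ T, n01 T = (Tᶜ.filter (fun i => Y0 i = 1)).card) :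
    expE N N₁ (fun T => (n11 T : ℝ) / N₁ - (n01 T : ℝ) / N₀) = τ ∧
    varE N N₁ (fun T => (n11 T : ℝ) / N₁ - (n01 T : ℝ) / N₀)
      = (N : ℝ) / (N - 1) *
        (p1 * (1 - p1) / N₁ + p0 * (1 - p0) / N₀ - τ * (1 - τ) / N) := by
  have hN₁N : N₁ ≤ N := by omega
  have hN₀' : (N₀ : ℝ) = N - N₁ := by rw [hN₀, Nat.cast_sub hN₁N]
  have hN : (0 : ℝ) < N := by exact_mod_cast (by omega : 0 < N)
  have hN₁pos : (0 : ℝ) < N₁ := by exact_mod_cast hN₁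
  have hN₀pos : (0 : ℝ) < N - N₁ := hN₀' ▸ by exact_mod_cast (by omega : 0 < N₀)
  have hs1 : ∑ i, (Y1 i : ℝ) = N * p1 := by
    rw [hp1, hN11, hN10, sum_cast_eq_card_filter_and_add hY1 hY0]
    field_simp
  have hs0 : ∑ i, (Y0 i : ℝ) = N * p0 := by
    rw [hp0, hN11, hN01, sum_cast_eq_card_filter_and_add hY0 hY1]
    simp only [and_comm]
    field_simp
  have hest : (fun T => (n11 T : ℝ) / N₁ - (n01 T : ℝ) / N₀) =
      fun T => ∑ i ∈ T, ((Y1 i : ℝ) / N₁ + Y0 i / N₀) - (∑ i, (Y0 i : ℝ)) / N₀ :=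
    funext fun T => by rw [hn11, hn01, card_filter_div_sub_card_compl_filter_div hY1 hY0]
  have hτ' : τ = p1 - p0 := by rw [hτ, hp1, hp0]; ring
  rw [hest, expE_sub_const hN₁N, varE_sub_const hN₁N, expE_sum hN₁N,
    varE_sum (by omega) hN₁N, sum_div_add_div_sq_of_le _ hmono hY1, sum_add_distrib,
    ← sum_div, ← sum_div, hs1, hs0, hτ', hN₀']
  constructor <;> · field_simp; ring

/-- Under monotonicity, `τ̂(T) = n₁₁(T)/N₁ − n₀₁(T)/N₀` has mean `τ` and variance
`(N/(N−1)) { p₁(1−p₁)/N₁ + p₀(1−p₀)/N₀ − τ(1−τ)/N }`. -/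
theorem stmt_5 (N N₁ N₀ : ℕ) (hN : 2 ≤ N) (hN₁ : 1 ≤ N₁) (hN₁' : N₁ ≤ N - 1)
    (hN₀ : N₀ = N - N₁)
    (Y1 Y0 : Fin N → ℕ) (hY1 : ∀ i, Y1 i ≤ 1) (hY0 : ∀ i, Y0 i ≤ 1)
    (hmono : ∀ i, Y0 i ≤ Y1 i)
    (N11 N10 N01 N00 : ℕ)
    (hN11 : N11 = (Finset.univ.filter (fun i => Y1 i = 1 ∧ Y0 i = 1)).card)
    (hN10 : N10 = (Finset.univ.filter (fun i => Y1 i = 1 ∧ Y0 i = 0)).card)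
    (hN01 : N01 = (Finset.univ.filter (fun i => Y1 i = 0 ∧ Y0 i = 1)).card)
    (hN00 : N00 = (Finset.univ.filter (fun i => Y1 i = 0 ∧ Y0 i = 0)).card)
    (p1 p0 τ : ℝ) (hp1 : p1 = ((N11 : ℝ) + N10) / N) (hp0 : p0 = ((N11 : ℝ) + N01) / N)
    (hτ : τ = ((N10 : ℝ) - N01) / N)
    (n11 n01 : Finset (Fin N) → ℕ)
    (hn11 : ∀ T, n11 T = (T.filter (fun i => Y1 i = 1)).card)
    (hn01 : ∀ T, n01 T = (Tᶜ.filter (fun i => Y0 i = 1)).card) :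
    expE N N₁ (fun T => (n11 T : ℝ) / N₁ - (n01 T : ℝ) / N₀) = τ ∧
    varE N N₁ (fun T => (n11 T : ℝ) / N₁ - (n01 T : ℝ) / N₀)
      = (N : ℝ) / (N - 1) *
        (p1 * (1 - p1) / N₁ + p0 * (1 - p0) / N₀ - τ * (1 - τ) / N) :=
  stmt_5_general N N₁ N₀ hN₁ hN₁' hN₀ Y1 Y0 hY1 hY0 hmono N11 N10 N01 hN11 hN10 hN01 p1 p0 τ hp1 hp0
    hτ n11 n01 hn11 hn01
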